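/- Let 𝒟 be a DNBA based on NBAs {A_i}_{i∈Id}, and let τ = q₀q₁q₂… be a global run for a fair global word w = a₀a₁a₂… ∈ Σ^ω in 𝒟. Then τ is accepting if and only if, for every i ∈ Id, the projected local run τ↓_{w,i} is an accepting run of A_i. -/
import Mathlib


set_option autoImplicit false

/-- A nondeterministic Büchi automaton over states `Q` and alphabet `A`. -/
structure NBA (Q A : Type) where
  delta : Q → A → Set Q
  Q0 : Set Q
  F : Set Q

/-- A run for the infinite word `u` in the NBA `A`. -/
def NBA.IsRun {Q A : Type} (𝒜 : NBA Q A) (u : ℕ → A) (ρ : ℕ → Q) : Prop :=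
  ρ 0 ∈ 𝒜.Q0 ∧ ∀ n, ρ (n + 1) ∈ 𝒜.delta (ρ n) (u n)

/-- A sequence of states is accepting if it visits `F` infinitely often. -/
def NBA.Accepting {Q A : Type} (𝒜 : NBA Q A) (ρ : ℕ → Q) : Prop :=
  ∀ N : ℕ, ∃ n, N ≤ n ∧ ρ n ∈ 𝒜.F

variable {Id : Type} {Qt At : Id → Type}

/-- A global alphabet symbol of the DNBA: a nonempty set of local symbols, containing
at most one symbol of each agent (represented as a function assigning to each agent
at most one of its local symbols; `GoodSym` expresses nonemptiness). -/
abbrev GSym (Id : Type) (At : Id → Type) := ∀ i : Id, Option (At i)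

/-- A global state of the DNBA: one local state per agent (the state sets of the
local automata being pairwise disjoint). -/
abbrev GState (Id : Type) (Qt : Id → Type) := ∀ i : Id, Qt i

/-- Global alphabet symbols are nonempty. -/
def GoodSym (a : GSym Id At) : Prop := ∃ i, a i ≠ none

/-- The transition relation of the DNBA based on the family `𝒜` of NBAs:
agents not participating in `a` do not move; participating agents move
according to their local transition function. -/
def DTransition (𝒜 : ∀ i, NBA (Qt i) (At i)) (q q' : GState Id Qt) (a : GSym Id At) : Prop :=
  ∀ i, (a i = none → q' i = q i) ∧ ∀ s, a i = some s → q' i ∈ (𝒜 i).delta (q i) s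

/-- A global run for the word `w` in the DNBA based on `𝒜`. -/
def IsGlobalRun (𝒜 : ∀ i, NBA (Qt i) (At i)) (w : ℕ → GSym Id At) (τ : ℕ → GState Id Qt) :
    Prop :=
  (∀ i, τ 0 i ∈ (𝒜 i).Q0) ∧ ∀ k, DTransition 𝒜 (τ k) (τ (k + 1)) (w k)

/-- A global word is fair if every agent participates in infinitely many of its symbols. -/
def Fair (w : ℕ → GSym Id At) : Prop := ∀ i : Id, ∀ N : ℕ, ∃ k, N ≤ k ∧ w k i ≠ none

/-- A global run is accepting if, for each agent `i`, it visits
`𝓕 i = {q | q↓ᵢ ∈ F i}` infinitely often. -/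
def GlobalAccepting (𝒜 : ∀ i, NBA (Qt i) (At i)) (τ : ℕ → GState Id Qt) : Prop :=
  ∀ i : Id, ∀ N : ℕ, ∃ k, N ≤ k ∧ τ k i ∈ (𝒜 i).F

/-- The `n`-th index `k` at which agent `i` participates in `w` (i.e. `w k i ≠ none`). -/
noncomputable def projIdx (w : ℕ → GSym Id At) (i : Id) (n : ℕ) : ℕ :=
  Nat.nth (fun k => w k i ≠ none) n

/-- The projection `τ↓_{w,i}` of a global run `τ` for `w` on agent `i`: project every
state on its `i`-th component and remove `q (k+1)` whenever `a k ∩ Σᵢ = ∅`. -/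
noncomputable def projRun (w : ℕ → GSym Id At) (τ : ℕ → GState Id Qt) (i : Id) : ℕ → Qt i
  | 0 => τ 0 i
  | n + 1 => τ (projIdx w i n + 1) i

/-- a global run `τ` for a fair global word `w` in the DNBA based on the
family `𝒜` of NBAs is accepting if and only if, for every agent `i`, the projected local
run `τ↓_{w,i}` is an accepting run of `𝒜 i`. -/
theorem global_accepting_iff_proj_accepting
    {Id : Type} {Qt At : Id → Type}
    [Fintype Id] [Nonempty Id]
    [∀ i, Fintype (Qt i)] [∀ i, Nonempty (Qt i)] [∀ i, Fintype (At i)]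
    (𝒜 : ∀ i, NBA (Qt i) (At i))
    (w : ℕ → GSym Id At) (hnonempty : ∀ k, GoodSym (w k)) (hfair : Fair w)
    (τ : ℕ → GState Id Qt) (hτ : IsGlobalRun 𝒜 w τ) :
    GlobalAccepting 𝒜 τ ↔ ∀ i : Id, (𝒜 i).Accepting (projRun w τ i) := by
    classical
  constructor
  · intro hacc i N
    set p := fun j => w j i ≠ none with hp
    have hinf : (setOf p).Infinite := by
      apply Set.infinite_of_not_bddAbove
      rintro ⟨B, hB⟩
      obtain ⟨k, hk, hk'⟩ := hfair i (B + 1)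
      exact absurd (hB hk') (by omega)
    have key : ∀ k, τ k i = projRun w τ i (Nat.count p k) := by
      intro k
      induction k with
      | zero => simp [projRun]
      | succ k ih =>
        by_cases h : p k
        · rw [Nat.count_succ, if_pos h]
          show τ (k + 1) i = projRun w τ i (Nat.count p k + 1)
          simp only [projRun, projIdx, ← hp, Nat.nth_count h]
        · have heq := ((hτ.2 k) i).1 (by simpa [p] using h)
          rw [heq, ih]
          congr 1
          rw [Nat.count_succ, if_neg h]
          rfl
    obtain ⟨k, hk, hkF⟩ := hacc i (Nat.nth p N + 1)
    refine ⟨Nat.count p k, ?_, ?_⟩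
    · have h1 : Nat.count p (Nat.nth p N + 1) = N + 1 :=
        Nat.count_nth_succ_of_infinite hinf N
      have h2 := Nat.count_monotone p hk
      omega
    · rw [← key k]; exact hkF
  · intro h i N
    obtain ⟨n, hn, hF⟩ := h i (N + 1)
    obtain ⟨m, rfl⟩ : ∃ m, n = m + 1 := ⟨n - 1, by omega⟩
    set p := fun j => w j i ≠ none with hp
    have hinf : (setOf p).Infinite := by
      apply Set.infinite_of_not_bddAbove
      rintro ⟨B, hB⟩
      obtain ⟨k, hk, hk'⟩ := hfair i (B + 1)
      exact absurd (hB hk') (by omega)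
    refine ⟨Nat.nth p m + 1, ?_, hF⟩
    have : m ≤ Nat.nth p m := (Nat.nth_strictMono hinf).id_le m
    omega
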